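/- arXiv:1104.3500 — 2 statements merged into one kernel-verified Lean document; each statement's English description precedes it below -/
import Mathlib

section
/- The lexicographically least right-infinite binary 7/3-power-free word is 001001·t̄, where t̄ is the complement of the Thue–Morse word (the fixed point of μ starting with 1). -/
/-- Thue–Morse morphism on finite binary words: 0 ↦ 01, 1 ↦ 10 (0 = false, 1 = true). -/
def mu (w : List Bool) : List Bool := w.flatMap (fun b => [b, !b])

/-- Thue–Morse morphism on right-infinite binary words. -/
def muI (x : ℕ → Bool) : ℕ → Bool := fun n => if n % 2 = 0 then x (n / 2) else !(x (n / 2))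

/-- Prepend a finite word to an infinite word. -/
def appendInf (u : List Bool) (x : ℕ → Bool) : ℕ → Bool :=
  fun n => if h : n < u.length then u.get ⟨n, h⟩ else x (n - u.length)

/-- `w` is a prefix of the infinite word `x`. -/
def InfPrefix (w : List Bool) (x : ℕ → Bool) : Prop :=
  ∀ i (h : i < w.length), w.get ⟨i, h⟩ = x i

/-- The finite word `w` is `p`-periodic. -/
def ListPeriodic (w : List Bool) (p : ℕ) : Prop :=
  ∀ i, i + p < w.length → w.getD i false = w.getD (i + p) false

/-- `w` occurs as a factor of the infinite word `x`. -/
def IsFactor (x : ℕ → Bool) (w : List Bool) : Prop :=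
  ∃ i, ∀ k (h : k < w.length), w.get ⟨k, h⟩ = x (i + k)

/-- `w` has exponent ≥ β : it has a period `p ≥ 1` with `|w| ≥ β·p`. -/
def HasExpGE (w : List Bool) (β : ℚ) : Prop :=
  ∃ p, 1 ≤ p ∧ ListPeriodic w p ∧ β * p ≤ (w.length : ℚ)

/-- `w` has exponent > β. -/
def HasExpGT (w : List Bool) (β : ℚ) : Prop :=
  ∃ p, 1 ≤ p ∧ ListPeriodic w p ∧ β * p < (w.length : ℚ)

/-- The infinite word `x` is β-power-free: no factor has exponent ≥ β. -/
def FreeI (x : ℕ → Bool) (β : ℚ) : Prop := ∀ w, IsFactor x w → ¬ HasExpGE w β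

/-- The infinite word `x` is β⁺-power-free: no factor has exponent > β. -/
def FreePlusI (x : ℕ → Bool) (β : ℚ) : Prop := ∀ w, IsFactor x w → ¬ HasExpGT w β

/-- The finite word `x` is β-power-free. -/
def FreeL (x : List Bool) (β : ℚ) : Prop := ∀ w, w <:+: x → ¬ HasExpGE w β

/-- The finite word `x` is β⁺-power-free. -/
def FreeLPlus (x : List Bool) (β : ℚ) : Prop := ∀ w, w <:+: x → ¬ HasExpGT w β

/-- The infinite word `x` is 7/3-power-free. -/
def Free73 (x : ℕ → Bool) : Prop := FreeI x (7/3)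

/-- The prefix of length `n` of the infinite word `x` is `p`-periodic. -/
def PrefPeriodic (x : ℕ → Bool) (p n : ℕ) : Prop := ∀ i, i + p < n → x i = x (i + p)

/-- The set {ε, 0, 00, 1, 11}. -/
def P5 : Set (List Bool) :=
  {[], [false], [false, false], [true], [true, true]}

/-- Thue–Morse word: parity of the number of ones in base 2. -/
def tmWord (n : ℕ) : Bool := (Nat.digits 2 n).sum % 2 == 1

/-- Lexicographic order (0 < 1) on infinite binary words. -/
def LexLE (u v : ℕ → Bool) : Prop :=
  u = v ∨ ∃ n, (∀ k < n, u k = v k) ∧ u n = false ∧ v n = true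

/-- The 2-kernel of an infinite word. -/
def Kernel2 (x : ℕ → Bool) : Set (ℕ → Bool) :=
  {y | ∃ i j, j < 2 ^ i ∧ y = fun n => x (2 ^ i * n + j)}

/-- An infinite word is 2-automatic iff its 2-kernel is finite. -/
def TwoAutomatic (x : ℕ → Bool) : Prop := (Kernel2 x).Finite

/-- complement of Thue-Morse -/
def tb (n : ℕ) : Bool := !(tmWord n)

lemma tm_zero : tmWord 0 = false := by simp [tmWord]

lemma tm_even (n : ℕ) : tmWord (2*n) = tmWord n := by
  rcases Nat.eq_zero_or_pos n with h | h
  · simp [h]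
  · unfold tmWord
    rw [Nat.digits_def' (by norm_num : 1 < 2) (by omega : 0 < 2*n)]
    simp [Nat.mul_div_cancel_left _ (by norm_num : 0 < 2), Nat.mul_mod_right]

lemma tm_odd (n : ℕ) : tmWord (2*n+1) = !(tmWord n) := by
  unfold tmWord
  rw [Nat.digits_def' (by norm_num : 1 < 2) (by omega : 0 < 2*n+1)]
  have h1 : (2*n+1) % 2 = 1 := by omega
  have h2 : (2*n+1) / 2 = n := by omega
  rw [h1, h2]
  simp only [List.sum_cons]
  rcases Nat.mod_two_eq_zero_or_one (Nat.digits 2 n).sum with h | h <;>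
    simp [Nat.add_mod, h]

lemma tb_even (n : ℕ) : tb (2*n) = tb n := by simp [tb, tm_even]
lemma tb_odd (n : ℕ) : tb (2*n+1) = !(tb n) := by simp [tb, tm_odd]
lemma tb_zero : tb 0 = true := by simp [tb, tm_zero]

/-- fuel-based computable Thue-Morse for decide -/
def ctAux : ℕ → ℕ → Bool
  | 0, _ => false
  | f+1, n => if n = 0 then false else ((ctAux f (n/2)).xor (n % 2 == 1))

def ct (n : ℕ) : Bool := ctAux n n

lemma ctAux_correct : ∀ f n, n ≤ f → ctAux f n = tmWord n := by
  intro f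
  induction f with
  | zero => intro n h; interval_cases n; simp [ctAux, tm_zero]
  | succ f IH =>
    intro n h
    rcases Nat.eq_zero_or_pos n with h0 | h0
    · simp [h0, ctAux, tm_zero]
    · have hn2 : n / 2 ≤ f := by omega
      have := IH (n/2) hn2
      show ctAux (f+1) n = tmWord n
      rw [ctAux, if_neg (by omega), this]
      rcases Nat.mod_two_eq_zero_or_one n with h2 | h2
      · have : n = 2 * (n/2) := by omega
        conv_rhs => rw [this, tm_even]
        simp [h2]
      · have : n = 2 * (n/2) + 1 := by omega
        conv_rhs => rw [this, tm_odd]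
        simp [h2]

lemma ct_eq (n : ℕ) : ct n = tmWord n := ctAux_correct n n le_rfl


/-- no three equal consecutive letters in tbar -/
lemma no3 (a : ℕ) (h1 : tb a = tb (a+1)) (h2 : tb (a+1) = tb (a+2)) : False := by
  rcases Nat.even_or_odd a with ⟨c, hc⟩ | ⟨c, hc⟩
  · subst hc
    rw [show c + c = 2*c by ring, show 2*c + 1 = 2*c+1 by rfl, tb_even, tb_odd] at h1
    cases tb c <;> simp_all
  · subst hc
    rw [show 2*c+1+1 = 2*(c+1) by ring, show 2*c+1+2 = 2*(c+1)+1 by ring, tb_even, tb_odd] at h2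
    cases tb (c+1) <;> simp_all

/-- Thue: tbar has no overlap -/
lemma thue : ∀ p, 1 ≤ p → ∀ i, ¬ (∀ k, k ≤ p → tb (i+k) = tb (i+k+p)) := by
  intro p
  induction p using Nat.strong_induction_on with
  | _ p IH =>
  intro hp i H
  rcases Nat.lt_or_ge p 3 with h3 | h3
  · -- p = 1 or 2
    interval_cases p
    · exact no3 i (by have := H 0 (by omega); simpa using this)
        (by have := H 1 (by omega); rw [show i+1+1 = i+2 by ring] at this; simpa using this)
    · -- p = 2 : even descent to p=1
      rcases Nat.even_or_odd i with ⟨b, hb⟩ | ⟨b, hb⟩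
      · apply IH 1 (by omega) (by omega) b
        intro k hk
        have := H (2*k) (by omega)
        rw [hb, show b+b+2*k = 2*(b+k) by ring, show 2*(b+k)+2 = 2*(b+k+1) by ring,
          tb_even, tb_even] at this
        rw [show b+k+1 = b+k+1 by rfl]
        exact this
      · apply IH 1 (by omega) (by omega) b
        intro k hk
        have := H (2*k) (by omega)
        rw [hb, show 2*b+1+2*k = 2*(b+k)+1 by ring, show 2*(b+k)+1+2 = 2*(b+k+1)+1 by ring,
          tb_odd, tb_odd] at this
        simpa using this
  · rcases Nat.even_or_odd p with ⟨q, hq⟩ | ⟨h, hh⟩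
    · -- p even, descend
      have hq1 : 1 ≤ q := by omega
      rcases Nat.even_or_odd i with ⟨b, hb⟩ | ⟨b, hb⟩
      · apply IH q (by omega) hq1 b
        intro k hk
        have := H (2*k) (by omega)
        rw [hb, hq, show b+b+2*k = 2*(b+k) by ring, show 2*(b+k)+(q+q) = 2*(b+k+q) by ring,
          tb_even, tb_even] at this
        exact this
      · apply IH q (by omega) hq1 b
        intro k hk
        have := H (2*k) (by omega)
        rw [hb, hq, show 2*b+1+2*k = 2*(b+k)+1 by ring, show 2*(b+k)+1+(q+q) = 2*(b+k+q)+1 by ring,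
          tb_odd, tb_odd] at this
        simpa using this
    · -- p odd >= 3
      have hh1 : 1 ≤ h := by omega
      rcases Nat.even_or_odd i with ⟨b, hb⟩ | ⟨b, hb⟩
      · -- i = 2b : relations R(b+h), R(b+h+1)
        have E0 := H 0 (by omega)
        have E1 := H 1 (by omega)
        have E2 := H 2 (by omega)
        have E3 := H 3 (by omega)
        rw [hb, hh] at E0 E1 E2 E3
        rw [show b+b+0 = 2*b by ring, show 2*b+(2*h+1) = 2*(b+h)+1 by ring, tb_even, tb_odd] at E0
        rw [show b+b+1 = 2*b+1 by ring, show 2*b+1+(2*h+1) = 2*(b+h+1) by ring, tb_odd, tb_even] at E1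
        rw [show b+b+2 = 2*(b+1) by ring, show 2*(b+1)+(2*h+1) = 2*(b+h+1)+1 by ring, tb_even, tb_odd] at E2
        rw [show b+b+3 = 2*(b+1)+1 by ring, show 2*(b+1)+1+(2*h+1) = 2*(b+h+2) by ring, tb_odd, tb_even] at E3
        -- E0 : tb b = !tb (b+h) ; E1 : !tb b = tb (b+h+1) ; E2 : tb (b+1) = !tb (b+h+1) ; E3 : !tb (b+1) = tb (b+h+2)
        apply no3 (b+h)
        · cases hbv : tb b <;> rw [hbv] at E0 E1 <;> simp_all
        · rw [show b+h+1+1 = b+h+2 by ring]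
          cases hbv : tb (b+1) <;> rw [hbv] at E2 E3 <;> simp_all
      · -- i = 2b+1 : relations R'(b), R'(b+1)
        have E0 := H 0 (by omega)
        have E1 := H 1 (by omega)
        have E2 := H 2 (by omega)
        have E3 := H 3 (by omega)
        rw [hb, hh] at E0 E1 E2 E3
        rw [show 2*b+1+0 = 2*b+1 by ring, show 2*b+1+(2*h+1) = 2*(b+h+1) by ring, tb_odd, tb_even] at E0
        rw [show 2*b+1+1 = 2*(b+1) by ring, show 2*(b+1)+(2*h+1) = 2*(b+h+1)+1 by ring, tb_even, tb_odd] at E1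
        rw [show 2*b+1+2 = 2*(b+1)+1 by ring, show 2*(b+1)+1+(2*h+1) = 2*(b+h+2) by ring, tb_odd, tb_even] at E2
        rw [show 2*b+1+3 = 2*(b+2) by ring, show 2*(b+2)+(2*h+1) = 2*(b+h+2)+1 by ring, tb_even, tb_odd] at E3
        -- E0 : !tb b = tb (b+h+1) ; E1 : tb (b+1) = !tb (b+h+1) ; E2 : !tb(b+1) = tb (b+h+2) ; E3 : tb (b+2) = !tb (b+h+2)
        apply no3 b
        · cases hbv : tb (b+h+1) <;> rw [hbv] at E0 E1 <;> simp_all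
        · rw [show b+1+1 = b+2 by ring]
          cases hbv : tb (b+h+2) <;> rw [hbv] at E2 E3 <;> simp_all

lemma tb_small : tb 0 = true ∧ tb 1 = false ∧ tb 2 = false ∧ tb 3 = true ∧ tb 4 = false := by
  have h0 := tb_zero
  have h1 : tb 1 = false := by have := tb_odd 0; rw [h0] at this; simpa using this
  have h2 : tb 2 = false := by have := tb_even 1; rw [h1] at this; simpa using this
  have h3 : tb 3 = true := by have := tb_odd 1; rw [h1] at this; simpa using this
  have h4 : tb 4 = false := by have := tb_even 2; rw [h2] at this; simpa using this
  exact ⟨h0, h1, h2, h3, h4⟩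

lemma ct_ne (a b : ℕ) (h : ct a ≠ ct b) : tb a ≠ tb b := by
  rw [ct_eq, ct_eq] at h
  simp only [tb]
  intro hc; apply h
  cases ha : tmWord a <;> cases hb : tmWord b <;> simp_all

lemma decB : ∀ q, q < 13 → 7 ≤ q → ∃ a, a < 13 ∧ a + 3 ≤ q ∧ ct a ≠ ct (a+q) := by decide

/-- no long periodic prefixes of tbar -/
lemma lemS : ∀ p, 13 ≤ p → ¬ (∀ j, j + 6 ≤ p → tb j = tb (j+p)) := by
  intro p
  induction p using Nat.strong_induction_on with
  | _ p IH =>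
  intro hp H
  rcases Nat.even_or_odd p with ⟨q, hq⟩ | ⟨h, hh⟩
  · -- even
    have hq7 : 7 ≤ q := by omega
    have Hq : ∀ a, a + 3 ≤ q → tb a = tb (a+q) := by
      intro a ha
      have := H (2*a) (by omega)
      rw [hq, show 2*a + (q+q) = 2*(a+q) by ring, tb_even, tb_even] at this
      exact this
    rcases Nat.lt_or_ge q 13 with hlt | hge
    · obtain ⟨a, -, ha, hne⟩ := decB q hlt hq7
      exact (ct_ne a (a+q) hne) (Hq a ha)
    · exact IH q (by omega) hge (fun j hj => Hq j (by omega))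
  · -- odd : use j = 1, 2
    obtain ⟨-, h1, h2, -, -⟩ := tb_small
    have E1 := H 1 (by omega)
    have E2 := H 2 (by omega)
    rw [hh, show 1 + (2*h+1) = 2*(h+1) by ring, tb_even, h1] at E1
    rw [hh, show 2 + (2*h+1) = 2*(h+1)+1 by ring, tb_odd, h2] at E2
    rw [← E1] at E2
    simp at E2

def myL : ℕ → Bool := appendInf [false, false, true, false, false, true] (fun n => !(tmWord n))
def LcB (n : ℕ) : Bool := if n < 6 then [false, false, true, false, false, true].getD n false else !(ct (n-6))

lemma myL_eq (n : ℕ) : myL n = LcB n := by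
  by_cases h : n < 6
  · simp only [myL, appendInf, LcB, List.length_cons, List.length_nil]
    rw [dif_pos (by simpa using h), if_pos h]
    interval_cases n <;> rfl
  · simp only [myL, appendInf, LcB, List.length_cons, List.length_nil]
    rw [dif_neg (by simpa using h), if_neg h, ct_eq]

lemma myL_ge6 (n : ℕ) (h : 6 ≤ n) : myL n = tb (n - 6) := by
  rw [myL_eq, LcB, if_neg (by omega), tb, ct_eq]

lemma decA : ∀ i, i < 6 → ∀ p, p < 13 → 1 ≤ p → ∃ k, k ≤ p ∧ LcB (i+k) ≠ LcB (i+k+p) := by decide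

lemma rat73 (p ℓ : ℕ) (h : (7/3 : ℚ) * p ≤ (ℓ : ℚ)) : 7 * p ≤ 3 * ℓ := by
  have h3 : (0:ℚ) < 3 := by norm_num
  rw [div_mul_eq_mul_div, div_le_iff₀ h3] at h
  have : 7 * p ≤ ℓ * 3 := by exact_mod_cast h
  omega

theorem part1 : Free73 myL := by
  rintro w ⟨i0, hw⟩ ⟨p, hp1, hper, hlen⟩
  set ℓ := w.length with hℓ
  have hnat : 7 * p ≤ 3 * ℓ := rat73 p ℓ hlen
  have hlen2 : 2*p + 1 ≤ ℓ := by omega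
  have E : ∀ k, k ≤ p → myL (i0+k) = myL (i0+k+p) := by
    intro k hk
    have h1 : k < ℓ := by omega
    have h2 : k + p < ℓ := by omega
    have hthis := hper k h2
    rw [List.getD_eq_getElem _ _ h1, List.getD_eq_getElem _ _ h2] at hthis
    have e1 : w.get ⟨k, h1⟩ = myL (i0+k) := hw k h1
    have e2 : w.get ⟨k+p, h2⟩ = myL (i0+(k+p)) := hw (k+p) h2
    simp only [List.get_eq_getElem] at e1 e2
    have : myL (i0+k) = myL (i0+(k+p)) := e1 ▸ e2 ▸ hthis
    rw [show i0 + (k+p) = i0 + k + p by ring] at this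
    exact this
  rcases Nat.lt_or_ge i0 6 with hi | hi
  · rcases Nat.lt_or_ge p 13 with hp13 | hp13
    · obtain ⟨k, hk, hne⟩ := decA i0 hi p hp13 hp1
      exact hne (by rw [← myL_eq, ← myL_eq]; exact E k hk)
    · apply lemS p hp13
      intro j hj
      have hk : j + 6 - i0 ≤ p := by omega
      have := E (j + 6 - i0) hk
      rw [myL_ge6 _ (by omega), myL_ge6 _ (by omega)] at this
      rw [show i0 + (j + 6 - i0) - 6 = j by omega, show i0 + (j+6-i0) + p - 6 = j + p by omega] at this
      exact this
  · apply thue p hp1 (i0 - 6)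
    intro k hk
    have := E k hk
    rw [myL_ge6 _ (by omega), myL_ge6 _ (by omega)] at this
    rw [show i0 + k - 6 = i0 - 6 + k by omega, show i0 + k + p - 6 = i0 - 6 + k + p by omega] at this
    exact this

/-- produce a contradiction from an explicit periodic stretch with exponent ≥ 7/3 -/
lemma perio (x : ℕ → Bool) (hx : Free73 x) (c p ℓ : ℕ) (hp : 1 ≤ p) (hlen : 7*p ≤ 3*ℓ)
    (h : ∀ δ, δ + p < ℓ → x (c+δ) = x (c+δ+p)) : False := by
  apply hx (List.ofFn (fun δ : Fin ℓ => x (c + δ)))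
  · exact ⟨c, by intro k hk; simp [List.get_ofFn]⟩
  · refine ⟨p, hp, ?_, ?_⟩
    · intro i hi
      rw [List.length_ofFn] at hi
      rw [List.getD_eq_getElem _ _ (by rw [List.length_ofFn]; omega),
          List.getD_eq_getElem _ _ (by rw [List.length_ofFn]; exact hi)]
      simp only [List.getElem_ofFn]
      rw [show c + (i+p) = c + i + p by ring]
      exact h i hi
    · rw [List.length_ofFn]
      have h3 : (0:ℚ) < 3 := by norm_num
      rw [div_mul_eq_mul_div, div_le_iff₀ h3]
      have hn : (7*p : ℕ) ≤ ℓ * 3 := by omega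
      exact_mod_cast hn

lemma cube (x : ℕ → Bool) (hx : Free73 x) (c : ℕ) (h1 : x c = x (c+1)) (h2 : x (c+1) = x (c+2)) :
    False := by
  apply perio x hx c 1 3 (by omega) (by omega)
  intro δ hδ
  have : δ = 0 ∨ δ = 1 := by omega
  rcases this with rfl | rfl
  · exact h1
  · exact h2

/-- decoding a mu-image preserves 7/3-freeness -/
lemma lift (x : ℕ → Bool) (hx : Free73 x) (r : ℕ)
    (hb : ∀ j, x (r + 2*j + 1) = !(x (r + 2*j))) :
    Free73 (fun j => x (r + 2*j)) := by
  rintro w ⟨i, hw⟩ ⟨p, hp1, hper, hlen⟩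
  set ℓ := w.length with hℓ
  have hnat : 7 * p ≤ 3 * ℓ := by
    have h3 : (0:ℚ) < 3 := by norm_num
    rw [div_mul_eq_mul_div, div_le_iff₀ h3] at hlen
    have : (7*p : ℚ) ≤ 3 * ℓ := hlen.trans_eq (by ring)
    exact_mod_cast this
  have hyper : ∀ j, j + p < ℓ → x (r + 2*(i+j)) = x (r + 2*(i+j+p)) := by
    intro j hj
    have h1 : j < ℓ := by omega
    have hthis := hper j hj
    rw [List.getD_eq_getElem _ _ h1, List.getD_eq_getElem _ _ hj] at hthis
    have e1 := hw j h1
    have e2 := hw (j+p) hj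
    simp only [List.get_eq_getElem] at e1 e2
    have : x (r + 2*(i+j)) = x (r + 2*(i+(j+p))) := e1 ▸ e2 ▸ hthis
    rwa [show i + (j+p) = i+j+p by ring] at this
  apply perio x hx (r + 2*i) (2*p) (2*ℓ) (by omega) (by omega)
  intro δ hδ
  rcases Nat.even_or_odd δ with ⟨j, hj⟩ | ⟨j, hj⟩
  · have hjp : j + p < ℓ := by omega
    have := hyper j hjp
    rw [show r + 2*i + δ = r + 2*(i+j) by omega,
        show r + 2*(i+j) + 2*p = r + 2*(i+j+p) by ring]
    exact this
  · have hjp : j + p < ℓ := by omega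
    have hv := hyper j hjp
    rw [show r + 2*i + δ = r + 2*(i+j) + 1 by omega,
        show r + 2*(i+j) + 1 + 2*p = r + 2*(i+j+p) + 1 by ring,
        hb (i+j), hb (i+j+p), hv]

/-- two squares at positions ≥ 1 with opposite parities are impossible -/
lemma clash : ∀ d (x : ℕ → Bool), Free73 x → ∀ i, 1 ≤ i → d % 2 = 1 →
    x i = x (i+1) → x (i+d) = x (i+d+1) → False := by
  intro d
  induction d using Nat.strong_induction_on with
  | _ d IH =>
  intro x hx i hi hd hsq1 hsq2
  by_cases hmid : ∃ k, i < k ∧ k < i + d ∧ x k = x (k+1)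
  · obtain ⟨k, hk1, hk2, hk3⟩ := hmid
    rcases Nat.mod_two_eq_zero_or_one (k - i) with hpar | hpar
    · -- j - k odd
      have h2 : (i + d - k) % 2 = 1 := by omega
      have := IH (i+d-k) (by omega) x hx k (by omega) h2 hk3
      apply this
      rw [show k + (i+d-k) = i + d by omega]
      exact hsq2
    · have := IH (k-i) (by omega) x hx i hi hpar hsq1
      apply this
      rw [show i + (k-i) = k by omega]
      exact hk3
  · push_neg at hmid
    -- alternation
    have halt : ∀ δ, 1 ≤ δ → δ ≤ d → x (i+δ) = (if δ % 2 = 1 then x i else !(x i)) := by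
      intro δ
      induction δ with
      | zero => omega
      | succ δ IH2 =>
        intro h1 h2
        rcases Nat.eq_or_lt_of_le h1 with he | hlt
        · rw [← he]; simpa using hsq1.symm
        · have hδ1 : 1 ≤ δ := by omega
          have hδd : δ ≤ d := by omega
          have hne := hmid (i+δ) (by omega) (by omega)
          have hIH := IH2 hδ1 hδd
          have hflip : x (i+δ+1) = !(x (i+δ)) := by
            revert hne; cases x (i+δ) <;> cases x (i+δ+1) <;> simp
          rw [show i + (δ+1) = i + δ + 1 by ring, hflip, hIH]
          rcases Nat.mod_two_eq_zero_or_one δ with hp2 | hp2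
          · have hp3 : (δ+1) % 2 = 1 := by omega
            simp [hp2, hp3]
          · have hp3 : (δ+1) % 2 = 0 := by omega
            simp [hp2, hp3]
    rcases Nat.lt_or_ge d 5 with hd5 | hd5
    · have hd13 : d = 1 ∨ d = 3 := by omega
      rcases hd13 with rfl | rfl
      · exact cube x hx i hsq1 hsq2
      · obtain ⟨i', rfl⟩ : ∃ i', i = i' + 1 := ⟨i-1, by omega⟩
        have A1 : x (i'+1) = x (i'+2) := hsq1
        have A2 : x (i'+4) = x (i'+5) := hsq2
        have v2 : x (i'+3) = !(x (i'+1)) := by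
          have := halt 2 (by omega) (by omega)
          simpa using this
        have v3 : x (i'+4) = x (i'+1) := by
          have := halt 3 (by omega) (by omega)
          simpa using this
        have v4 : x (i'+5) = x (i'+1) := A2.symm.trans v3
        by_cases hprev : x i' = x (i'+1)
        · exact cube x hx i' hprev A1
        · have hprev' : x i' = !(x (i'+1)) := by
            revert hprev; cases x i' <;> cases x (i'+1) <;> simp
          by_cases hnext : x (i'+5) = x (i'+6)
          · exact cube x hx (i'+4) A2 hnext
          · have hnext' : x (i'+6) = !(x (i'+5)) := by
              revert hnext; cases x (i'+5) <;> cases x (i'+6) <;> simp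
            apply perio x hx i' 3 7 (by omega) (by omega)
            intro δ hδ
            have hδ4 : δ = 0 ∨ δ = 1 ∨ δ = 2 ∨ δ = 3 := by omega
            rcases hδ4 with rfl | rfl | rfl | rfl
            · show x (i'+0) = x (i'+0+3)
              rw [show i'+0 = i' from rfl, show i'+0+3 = i'+3 from rfl, hprev', v2]
            · show x (i'+1) = x (i'+1+3)
              rw [show i'+1+3 = i'+4 from rfl, v3]
            · show x (i'+2) = x (i'+2+3)
              rw [show i'+2+3 = i'+5 from rfl, ← A1, v4]
            · show x (i'+3) = x (i'+3+3)
              rw [show i'+3+3 = i'+6 from rfl, v2, hnext', v4]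
    · -- d ≥ 5 : period 2 length 5 at i+1
      apply perio x hx (i+1) 2 5 (by omega) (by omega)
      intro δ hδ
      have e1 := halt (δ+1) (by omega) (by omega)
      have e2 := halt (δ+3) (by omega) (by omega)
      rw [show i+1+δ = i+(δ+1) by ring, show i+(δ+1)+2 = i+(δ+3) by ring, e1, e2]
      have : (δ+1) % 2 = (δ+3) % 2 := by omega
      rw [this]

/-- squares at ≥1 fix the parity: block structure -/
lemma blocks (x : ℕ → Bool) (hx : Free73 x) (s : ℕ) (hs : 1 ≤ s) (hsq : x s = x (s+1)) :
    ∀ e, 1 ≤ e → e % 2 ≠ s % 2 → x e ≠ x (e+1) := by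
  intro e he hpar hsq2
  rcases Nat.lt_or_ge e s with h | h
  · exact clash (s - e) x hx e he (by omega) hsq2 (by rw [show e + (s-e) = s by omega]; exact hsq)
  · have : s < e := by omega
    exact clash (e - s) x hx s hs (by omega) hsq (by rw [show s + (e-s) = e by omega]; exact hsq2)

def z1 : ℕ → Bool := fun n => if n = 0 then true else if n = 1 then false else tb (n-2)
def z2 : ℕ → Bool := fun n => if n = 0 then true else tb (n-1)

lemma bool_flip {a b : Bool} (h : a ≠ b) : b = !a := by
  revert h; cases a <;> cases b <;> simp

lemma z1_odd (j : ℕ) : z1 (2*j+1) = !(z1 (2*j)) := by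
  obtain ⟨h0, h1, h2, h3, h4⟩ := tb_small
  match j with
  | 0 => simp [z1, h0]
  | (j+1) =>
    show z1 (2*(j+1)+1) = !(z1 (2*(j+1)))
    have e1 : 2*(j+1)+1 ≠ 0 := by omega
    have e2 : 2*(j+1)+1 ≠ 1 := by omega
    have e3 : 2*(j+1) ≠ 0 := by omega
    have e4 : 2*(j+1) ≠ 1 := by omega
    simp only [z1, if_neg e1, if_neg e2, if_neg e3, if_neg e4]
    rw [show 2*(j+1)+1-2 = 2*j+1 by omega, show 2*(j+1)-2 = 2*j by omega, tb_odd, tb_even]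

example : True := trivial

lemma z1_even (j : ℕ) : z1 (2*j) = z2 j := by
  match j with
  | 0 => simp [z1, z2]
  | (j+1) =>
    have e3 : 2*(j+1) ≠ 0 := by omega
    have e4 : 2*(j+1) ≠ 1 := by omega
    simp only [z1, z2, if_neg e3, if_neg e4, if_neg (by omega : j+1 ≠ 0)]
    rw [show 2*(j+1)-2 = 2*j by omega, tb_even, show j+1-1 = j by omega]

lemma z2_odd_tb (j : ℕ) : z2 (2*j+1) = tb j := by
  simp only [z2, if_neg (by omega : 2*j+1 ≠ 0)]
  rw [show 2*j+1-1 = 2*j by omega, tb_even]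

lemma z2_even_flip (j : ℕ) : z2 (2*j+2) = !(z2 (2*j+1)) := by
  simp only [z2, if_neg (by omega : 2*j+2 ≠ 0), if_neg (by omega : 2*j+1 ≠ 0)]
  rw [show 2*j+2-1 = 2*j+1 by omega, show 2*j+1-1 = 2*j by omega, tb_odd, tb_even]

/-- level B : comparison against tbar -/
lemma lemB : ∀ q (w : ℕ → Bool), Free73 w → 1 ≤ q → (∀ j, j < q → w j = tb j) → w q = false →
    tb q = true → False := by
  intro q
  induction q using Nat.strong_induction_on with
  | _ q IH =>
  intro w hw hq1 hag hq htb
  obtain ⟨h0, h1, h2, h3, h4⟩ := tb_small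
  rcases Nat.lt_or_ge q 5 with hq5 | hq5
  · interval_cases q
    · rw [h1] at htb; exact absurd htb (by simp)
    · rw [h2] at htb; exact absurd htb (by simp)
    · apply cube w hw 1
      · rw [hag 1 (by omega), hag 2 (by omega), h1, h2]
      · rw [hag 2 (by omega), h2, hq]
    · rw [h4] at htb; exact absurd htb (by simp)
  · have hsq : w 1 = w 2 := by rw [hag 1 (by omega), hag 2 (by omega), h1, h2]
    have hbl := blocks w hw 1 (by omega) hsq
    rcases Nat.even_or_odd q with ⟨c, hc⟩ | ⟨c, hc⟩
    · -- q even ≥ 6 : descend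
      have hc3 : 3 ≤ c := by omega
      have hblocks : ∀ j, w (0 + 2*j + 1) = !(w (0 + 2*j)) := by
        intro j
        match j with
        | 0 =>
          show w 1 = !(w 0)
          rw [hag 0 (by omega), hag 1 (by omega), h0, h1]; rfl
        | (j+1) =>
          have hne := hbl (0+2*(j+1)) (by omega) (by omega)
          exact bool_flip hne
      have hw2 : Free73 (fun j => w (0 + 2*j)) := lift w hw 0 hblocks
      apply IH c (by omega) (fun j => w (0 + 2*j)) hw2 (by omega)
      · intro j hj
        show w (0 + 2*j) = tb j
        rw [show 0 + 2*j = 2*j by omega, hag (2*j) (by omega), tb_even]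
      · show w (0 + 2*c) = false
        rw [show 0 + 2*c = q by omega]; exact hq
      · rw [← tb_even, show 2*c = q by omega]; exact htb
    · -- q odd ≥ 5
      have hc2 : 2 ≤ c := by omega
      have hne := hbl (2*c) (by omega) (by omega)
      have hstep : w (2*c+1) = !(w (2*c)) := bool_flip hne
      have hq' : w (2*c) = tb c := by rw [hag (2*c) (by omega), tb_even]
      rw [show q = 2*c+1 by omega] at hq htb
      rw [tb_odd] at htb
      rw [hstep, hq'] at hq
      rw [hq] at htb
      exact absurd htb (by simp)

lemma myL_small : myL 0 = false ∧ myL 1 = false ∧ myL 2 = true ∧ myL 3 = false ∧ myL 4 = false ∧ myL 5 = true := by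
  refine ⟨?_, ?_, ?_, ?_, ?_, ?_⟩ <;> rw [myL_eq] <;> decide

lemma z1_vals : z1 0 = true ∧ z1 1 = false ∧ z1 2 = true ∧ z1 3 = false ∧ z1 4 = false := by
  obtain ⟨h0, h1, h2, h3, h4⟩ := tb_small
  refine ⟨rfl, rfl, ?_, ?_, ?_⟩ <;> simp [z1] <;> assumption

lemma z2_vals : z2 0 = true ∧ z2 1 = true ∧ z2 2 = false ∧ z2 3 = false ∧ z2 4 = true := by
  obtain ⟨h0, h1, h2, h3, h4⟩ := tb_small
  refine ⟨rfl, ?_, ?_, ?_, ?_⟩ <;> simp [z2] <;> assumption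

/-- level D : comparison against z2 = 1·tbar -/
lemma lemD : ∀ m (y : ℕ → Bool), Free73 y → 3 ≤ m → (∀ j, j < m → y j = z2 j) → y m = false →
    z2 m = true → False := by
  intro m y hy hm hag hym hzm
  obtain ⟨g0, g1, g2, g3, g4⟩ := z2_vals
  rcases Nat.lt_or_ge m 5 with hm5 | hm5
  · interval_cases m
    · rw [g3] at hzm; exact absurd hzm (by simp)
    · apply cube y hy 2
      · rw [hag 2 (by omega), hag 3 (by omega), g2, g3]
      · rw [hag 3 (by omega), g3, hym]
  · have hsq : y 2 = y 3 := by rw [hag 2 (by omega), hag 3 (by omega), g2, g3]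
    have hbl := blocks y hy 2 (by omega) hsq
    rcases Nat.even_or_odd m with ⟨c, hc⟩ | ⟨c, hc⟩
    · -- m even ≥ 6
      have hc3 : 3 ≤ c := by omega
      have hne := hbl (m-1) (by omega) (by omega)
      rw [show m - 1 + 1 = m by omega] at hne
      have hstep : y m = !(y (m-1)) := bool_flip hne
      have he : y (m-1) = z2 (m-1) := hag (m-1) (by omega)
      have hz : z2 m = !(z2 (m-1)) := by
        have h := z2_even_flip (c-1)
        rw [show 2*(c-1)+2 = m by omega, show 2*(c-1)+1 = m-1 by omega] at h
        exact h
      rw [hstep, he, ← hz, hzm] at hym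
      exact absurd hym (by simp)
    · -- m odd ≥ 5
      have hc2 : 2 ≤ c := by omega
      have hblocks : ∀ j, y (1 + 2*j + 1) = !(y (1 + 2*j)) := by
        intro j
        have hne := hbl (1+2*j) (by omega) (by omega)
        exact bool_flip hne
      have hy2 : Free73 (fun j => y (1 + 2*j)) := lift y hy 1 hblocks
      apply lemB c (fun j => y (1 + 2*j)) hy2 (by omega)
      · intro j hj
        show y (1 + 2*j) = tb j
        rw [hag (1+2*j) (by omega), show (1+2*j) = 2*j+1 by omega, z2_odd_tb]
      · show y (1 + 2*c) = false
        rw [show 1 + 2*c = m by omega]; exact hym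
      · rw [← z2_odd_tb, show 2*c+1 = m by omega]; exact hzm

/-- level C : comparison against z1 = 10·tbar -/
lemma lemC : ∀ k (y : ℕ → Bool), Free73 y → 4 ≤ k → (∀ j, j < k → y j = z1 j) → y k = false →
    z1 k = true → False := by
  intro k y hy hk hag hyk hzk
  obtain ⟨g0, g1, g2, g3, g4⟩ := z1_vals
  rcases Nat.lt_or_ge k 5 with hk5 | hk5
  · interval_cases k
    rw [g4] at hzk; exact absurd hzk (by simp)
  · have hsq : y 3 = y 4 := by rw [hag 3 (by omega), hag 4 (by omega), g3, g4]
    have hbl := blocks y hy 3 (by omega) hsq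
    rcases Nat.even_or_odd k with ⟨c, hc⟩ | ⟨c, hc⟩
    · -- k even ≥ 6 : descend to D
      have hc3 : 3 ≤ c := by omega
      have hblocks : ∀ j, y (0 + 2*j + 1) = !(y (0 + 2*j)) := by
        intro j
        match j with
        | 0 =>
          show y 1 = !(y 0)
          rw [hag 0 (by omega), hag 1 (by omega), g0, g1]; rfl
        | (j+1) =>
          have hne := hbl (0+2*(j+1)) (by omega) (by omega)
          exact bool_flip hne
      have hy2 : Free73 (fun j => y (0 + 2*j)) := lift y hy 0 hblocks
      apply lemD c (fun j => y (0 + 2*j)) hy2 (by omega)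
      · intro j hj
        show y (0 + 2*j) = z2 j
        rw [show 0 + 2*j = 2*j by omega, hag (2*j) (by omega), z1_even]
      · show y (0 + 2*c) = false
        rw [show 0 + 2*c = k by omega]; exact hyk
      · rw [← z1_even, show 2*c = k by omega]; exact hzk
    · -- k odd ≥ 5
      have hc2 : 2 ≤ c := by omega
      have hne := hbl (2*c) (by omega) (by omega)
      have hstep : y (2*c+1) = !(y (2*c)) := bool_flip hne
      have he : y (2*c) = z1 (2*c) := hag (2*c) (by omega)
      have hz := z1_odd c
      rw [show k = 2*c+1 by omega] at hyk hzk
      rw [hstep, he, ← hz, hzk] at hyk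
      exact absurd hyk (by simp)

lemma myL_z1 : ∀ j, myL (2 + 2*j) = z1 j := by
  obtain ⟨m0, m1, m2, m3, m4, m5⟩ := myL_small
  intro j
  match j with
  | 0 => exact m2
  | 1 => rw [show 2+2*1 = 4 by omega, m4]; rfl
  | (j+2) =>
    rw [myL_ge6 _ (by omega)]
    simp only [z1, if_neg (by omega : j+2 ≠ 0), if_neg (by omega : j+2 ≠ 1)]
    rw [show 2+2*(j+2)-6 = 2*j by omega, show j+2-2 = j by omega, tb_even]

/-- the master contradiction : no 7/3-free word is lexicographically below myL -/
lemma lemA (x : ℕ → Bool) (hx : Free73 x) (n : ℕ) (hag : ∀ k, k < n → x k = myL k)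
    (hxn : x n = false) (hLn : myL n = true) : False := by
  obtain ⟨m0, m1, m2, m3, m4, m5⟩ := myL_small
  obtain ⟨h0, h1, h2, h3, h4⟩ := tb_small
  rcases Nat.lt_or_ge n 9 with hn9 | hn9
  · interval_cases n
    · rw [m0] at hLn; exact absurd hLn (by simp)
    · rw [m1] at hLn; exact absurd hLn (by simp)
    · exact cube x hx 0 (by rw [hag 0 (by omega), hag 1 (by omega), m0, m1])
        (by rw [hag 1 (by omega), m1, hxn])
    · rw [m3] at hLn; exact absurd hLn (by simp)
    · rw [m4] at hLn; exact absurd hLn (by simp)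
    · exact cube x hx 3 (by rw [hag 3 (by omega), hag 4 (by omega), m3, m4])
        (by rw [hag 4 (by omega), m4, hxn])
    · -- n = 6 : 0010010 has period 3 length 7
      apply perio x hx 0 3 7 (by omega) (by omega)
      intro δ hδ
      have : δ = 0 ∨ δ = 1 ∨ δ = 2 ∨ δ = 3 := by omega
      rcases this with rfl | rfl | rfl | rfl
      · show x 0 = x 3
        rw [hag 0 (by omega), hag 3 (by omega), m0, m3]
      · show x (0+1) = x (0+1+3)
        rw [show (0+1 : ℕ) = 1 from rfl, show (0+1+3 : ℕ) = 4 from rfl,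
          hag 1 (by omega), hag 4 (by omega), m1, m4]
      · show x (0+2) = x (0+2+3)
        rw [show (0+2 : ℕ) = 2 from rfl, show (0+2+3 : ℕ) = 5 from rfl,
          hag 2 (by omega), hag 5 (by omega), m2, m5]
      · show x (0+3) = x (0+3+3)
        rw [show (0+3 : ℕ) = 3 from rfl, show (0+3+3 : ℕ) = 6 from rfl,
          hag 3 (by omega), m3, hxn]
    · -- n = 7
      rw [myL_ge6 7 (by omega), show (7-6 : ℕ) = 1 from rfl, h1] at hLn
      exact absurd hLn (by simp)
    · rw [myL_ge6 8 (by omega), show (8-6 : ℕ) = 2 from rfl, h2] at hLn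
      exact absurd hLn (by simp)
  · have hsq : x 3 = x 4 := by rw [hag 3 (by omega), hag 4 (by omega), m3, m4]
    have hbl := blocks x hx 3 (by omega) hsq
    rcases Nat.even_or_odd n with ⟨c, hc⟩ | ⟨c, hc⟩
    · -- n even ≥ 10 : descend to C with k = (n-2)/2 ≥ 4
      obtain ⟨k, rfl⟩ : ∃ k, n = 2*k+2 := ⟨c - 1, by omega⟩
      have hk4 : 4 ≤ k := by omega
      have hblocks : ∀ j, x (2 + 2*j + 1) = !(x (2 + 2*j)) := by
        intro j
        have hne := hbl (2+2*j) (by omega) (by omega)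
        exact bool_flip hne
      have hx2 : Free73 (fun j => x (2 + 2*j)) := lift x hx 2 hblocks
      apply lemC k (fun j => x (2 + 2*j)) hx2 hk4
      · intro j hj
        show x (2 + 2*j) = z1 j
        rw [hag (2+2*j) (by omega), myL_z1]
      · show x (2 + 2*k) = false
        rw [show 2 + 2*k = 2*k+2 by omega]; exact hxn
      · rw [← myL_z1, show 2 + 2*k = 2*k+2 by omega]; exact hLn
    · -- n odd ≥ 9
      obtain ⟨t, rfl⟩ : ∃ t, n = 2*t+7 := ⟨c - 3, by omega⟩
      have hne := hbl (2*t+6) (by omega) (by omega)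
      rw [show 2*t+6+1 = 2*t+7 by omega] at hne
      have hstep : x (2*t+7) = !(x (2*t+6)) := bool_flip hne
      have he : x (2*t+6) = myL (2*t+6) := hag (2*t+6) (by omega)
      have hm1 : myL (2*t+6) = tb t := by
        rw [myL_ge6 _ (by omega), show 2*t+6-6 = 2*t by omega, tb_even]
      have hm2 : myL (2*t+7) = !(tb t) := by
        rw [myL_ge6 _ (by omega), show 2*t+7-6 = 2*t+1 by omega, tb_odd]
      rw [hstep, he, hm1, ← hm2, hLn] at hxn
      exact absurd hxn (by simp)

/-- part 2 -/
theorem part2 : ∀ x : ℕ → Bool, Free73 x → LexLE myL x := by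
  intro x hx
  by_cases hall : ∀ n, myL n = x n
  · exact Or.inl (funext hall)
  · push_neg at hall
    have hex : ∃ n, ¬ (myL n = x n) := hall
    classical
    let n0 := Nat.find hex
    have hspec : ¬ (myL n0 = x n0) := Nat.find_spec hex
    have hmin : ∀ k, k < n0 → myL k = x k := by
      intro k hk
      by_contra hc
      exact absurd (Nat.find_min hex hk) (by simpa using hc)
    cases hLv : myL n0
    · refine Or.inr ⟨n0, hmin, hLv, ?_⟩
      rw [hLv] at hspec
      revert hspec; cases x n0 <;> simp
    · exfalso
      apply lemA x hx n0 (fun k hk => (hmin k hk).symm) ?_ hLv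
      rw [hLv] at hspec
      revert hspec; cases x n0 <;> simp


theorem stmt17 :
    Free73 (appendInf [false, false, true, false, false, true] (fun n => !(tmWord n))) ∧
    ∀ x : ℕ → Bool, Free73 x →
      LexLE (appendInf [false, false, true, false, false, true] (fun n => !(tmWord n))) x := by
  exact ⟨part1, part2⟩
end

section
/- Let t be a finite binary word, k ≥ 1, and let w be the infinite binary word w = t μ^k(t) μ^{2k}(t) μ^{3k}(t)…, i.e., the unique infinite word satisfying w = t·μ^k(w). Then w is 2-automatic. -/
/-!
With `L = |t|`, the equation `w = t · μᵏ(w)` says `w (L + n) = μᵏ(w) n`, and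
`μᵈ(x) (2ᵈ a + b) = tm (b mod 2ᵈ) ⊕ x (a + ⌊b / 2ᵈ⌋)` since `tm` is additive over binary blocks.
Such self-similarities of `w` compose (offsets `L`, `L'` at scales `d`, `d'` give offset
`L + 2ᵈ L'` at scale `d + d'`), so `w` is self-similar at every scale `ks` with offset below
`2^(L + ks)`. Choosing `s` with `ks ≤ i - L < k(s + 1)`, the kernel word `n ↦ w (2ⁱ n + j)`
becomes, for `n ≥ 1`, a possibly complemented copy of `n ↦ w (2^i' (n - 1) + e)` with
`i' ≤ L + k` and `e < 2^(i' + 1)`: finitely many words.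
-/

lemma tmWord_eq_xor_mod_two (n : ℕ) : tmWord n = xor (tmWord (n % 2)) (tmWord (n / 2)) := by
  rcases Nat.eq_zero_or_pos n with rfl | hn
  · rfl
  · rw [tmWord, Nat.digits_def' (by norm_num) hn, List.sum_cons]
    rcases Nat.mod_two_eq_zero_or_one n with h | h <;>
    rcases Nat.mod_two_eq_zero_or_one (Nat.digits 2 (n / 2)).sum with h' | h' <;>
      simp [tmWord, h, h', Nat.add_mod]

lemma tmWord_eq_xor_mod_two_pow (d n : ℕ) :
    tmWord n = xor (tmWord (n % 2 ^ d)) (tmWord (n / 2 ^ d)) := by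
  induction d generalizing n with
  | zero => simp [tmWord, Nat.mod_one]
  | succ d ih =>
    have hmod : n % 2 ^ (d + 1) % 2 = n % 2 := Nat.mod_mod_of_dvd n (dvd_pow_self 2 d.succ_ne_zero)
    have hdiv : n % 2 ^ (d + 1) / 2 = n / 2 % 2 ^ d := by
      rw [pow_succ', Nat.mod_mul_right_div_self]
    rw [tmWord_eq_xor_mod_two n, ih (n / 2), tmWord_eq_xor_mod_two (n % 2 ^ (d + 1)), hmod, hdiv,
      Nat.div_div_eq_div_mul, ← pow_succ', Bool.xor_assoc]

lemma tmWord_mod_two_pow_add (d e n : ℕ) :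
    tmWord (n % 2 ^ (d + e)) = xor (tmWord (n % 2 ^ d)) (tmWord (n / 2 ^ d % 2 ^ e)) := by
  rw [tmWord_eq_xor_mod_two_pow d (n % 2 ^ (d + e)),
    Nat.mod_mod_of_dvd n (pow_dvd_pow 2 (d.le_add_right e)), pow_add, Nat.mod_mul_right_div_self]

lemma muI_apply (x : ℕ → Bool) (n : ℕ) : muI x n = xor (tmWord (n % 2)) (x (n / 2)) := by
  rcases Nat.mod_two_eq_zero_or_one n with h | h <;> simp [muI, h, tmWord]

lemma muI_iterate_apply (m : ℕ) (x : ℕ → Bool) (n : ℕ) :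
    muI^[m] x n = xor (tmWord (n % 2 ^ m)) (x (n / 2 ^ m)) := by
  induction m generalizing x with
  | zero => simp [tmWord, Nat.mod_one]
  | succ m ih =>
    rw [Function.iterate_succ_apply, ih, muI_apply, tmWord_mod_two_pow_add, Nat.div_div_eq_div_mul,
      ← pow_succ, pow_one, Bool.xor_assoc]

/-- `w (L + n) = μᵈ(w) n` for all `n`, written with `n = 2ᵈ a + b`. -/
def SelfSimilar (w : ℕ → Bool) (L d : ℕ) : Prop :=
  ∀ a b, w (L + 2 ^ d * a + b) = xor (tmWord (b % 2 ^ d)) (w (a + b / 2 ^ d))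

namespace SelfSimilar

variable {w : ℕ → Bool}

lemma zero_zero : SelfSimilar w 0 0 := by
  intro a b
  simp [tmWord, Nat.mod_one]

lemma of_eq_appendInf {t : List Bool} {k : ℕ} (hw : w = appendInf t (muI^[k] w)) :
    SelfSimilar w t.length k := by
  intro a b
  have hn : w (t.length + (2 ^ k * a + b)) = muI^[k] w (2 ^ k * a + b) := by
    conv_lhs => rw [hw]
    simp [appendInf]
  rw [add_assoc, hn, muI_iterate_apply, Nat.mul_add_mod, Nat.mul_add_div (Nat.two_pow_pos k)]

lemma comp {L L' d d' : ℕ} (h : SelfSimilar w L d) (h' : SelfSimilar w L' d') :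
    SelfSimilar w (L + 2 ^ d * L') (d + d') := by
  intro a b
  have hsplit : L + 2 ^ d * L' + 2 ^ (d + d') * a + b = L + 2 ^ d * (L' + 2 ^ d' * a) + b := by
    ring
  rw [hsplit, h, h', tmWord_mod_two_pow_add, Nat.div_div_eq_div_mul, ← pow_add, Bool.xor_assoc]

lemma iterate {L d : ℕ} (hd : 1 ≤ d) (h : SelfSimilar w L d) (s : ℕ) :
    ∃ L', L' + L ≤ L * 2 ^ (d * s) ∧ SelfSimilar w L' (d * s) := by
  induction s with
  | zero => exact ⟨0, by simp, zero_zero⟩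
  | succ s ih =>
    obtain ⟨L', hL', h'⟩ := ih
    refine ⟨L + 2 ^ d * L', ?_, by rw [mul_add_one, add_comm (d * s)]; exact h.comp h'⟩
    have h2 : 2 ≤ 2 ^ d := Nat.le_self_pow (by omega) 2 |>.trans' (by norm_num)
    calc L + 2 ^ d * L' + L ≤ 2 ^ d * (L' + L) := by nlinarith
      _ ≤ 2 ^ d * (L * 2 ^ (d * s)) := Nat.mul_le_mul_left _ hL'
      _ = L * 2 ^ (d * (s + 1)) := by ring

lemma apply_two_pow_mul_succ_add {L d i : ℕ} (h : SelfSimilar w L d) (hL : L ≤ 2 ^ i)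
    (hd : d ≤ i) (m j : ℕ) :
    w (2 ^ i * (m + 1) + j) =
      xor (tmWord ((2 ^ i - L + j) % 2 ^ d)) (w (2 ^ (i - d) * m + (2 ^ i - L + j) / 2 ^ d)) := by
  have hi : 2 ^ i = 2 ^ d * 2 ^ (i - d) := by rw [← pow_add, Nat.add_sub_cancel' hd]
  have hsplit : 2 ^ i * (m + 1) + j = L + 2 ^ d * (2 ^ (i - d) * m) + (2 ^ i - L + j) := by
    rw [← mul_assoc, ← hi, mul_add_one]
    omega
  rw [hsplit, h]

end SelfSimilar

lemma twoAutomatic_of_selfSimilar {w : ℕ → Bool} (K : ℕ)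
    (h : ∀ i, ∃ L d, L ≤ 2 ^ i ∧ d ≤ i ∧ i ≤ d + K ∧ SelfSimilar w L d) : TwoAutomatic w := by
  -- `n = 0` is apart because `2ⁱ · 0 + j` may lie before the offset.
  let F : Bool × Bool × Fin (K + 1) × Fin (2 ^ (K + 1)) → ℕ → Bool := fun p n =>
    match n with
    | 0 => p.1
    | m + 1 => xor p.2.1 (w (2 ^ (p.2.2.1 : ℕ) * m + p.2.2.2))
  refine (Set.finite_range F).subset ?_
  rintro y ⟨i, j, hj, rfl⟩
  obtain ⟨L, d, hL, hdi, hiK, hw⟩ := h i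
  have he : (2 ^ i - L + j) / 2 ^ d < 2 ^ (K + 1) := by
    rw [Nat.div_lt_iff_lt_mul (Nat.two_pow_pos d), ← pow_add]
    calc 2 ^ i - L + j < 2 ^ (i + 1) := by rw [pow_succ]; omega
      _ ≤ 2 ^ (K + 1 + d) := Nat.pow_le_pow_right (by norm_num) (by omega)
  refine ⟨⟨w j, tmWord ((2 ^ i - L + j) % 2 ^ d), ⟨i - d, by omega⟩, ⟨_, he⟩⟩, ?_⟩
  funext n
  cases n with
  | zero => simp [F]
  | succ m => exact (hw.apply_two_pow_mul_succ_add hL hdi m j).symm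

theorem stmt19 (t : List Bool) (k : ℕ) (hk : 1 ≤ k) (w : ℕ → Bool)
    (hw : w = appendInf t (muI^[k] w)) : TwoAutomatic w := by
  refine twoAutomatic_of_selfSimilar (t.length + k) fun i => ?_
  rcases lt_or_ge i t.length with hi | hi
  · exact ⟨0, 0, Nat.zero_le _, Nat.zero_le _, by omega, SelfSimilar.zero_zero⟩
  · set s := (i - t.length) / k
    obtain ⟨L, hL, hself⟩ := (SelfSimilar.of_eq_appendInf hw).iterate hk s
    have hks : k * s ≤ i - t.length := Nat.mul_div_le _ _
    have hlt : i - t.length < k * (s + 1) := Nat.lt_mul_div_succ _ (by omega)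
    refine ⟨L, k * s, ?_, by omega, by rw [mul_add_one] at hlt; omega, hself⟩
    calc L ≤ t.length * 2 ^ (k * s) := by omega
      _ ≤ 2 ^ t.length * 2 ^ (k * s) := Nat.mul_le_mul_right _ (Nat.lt_two_pow_self).le
      _ ≤ 2 ^ i := by rw [← pow_add]; exact Nat.pow_le_pow_right (by norm_num) (by omega)
end
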